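/- arXiv:1310.7013 — 3 statements merged into one kernel-verified Lean document; each statement's English description precedes it below -/
import Mathlib

section
/- Under the viscous approximation setup, for each t > 0 the following identity holds: ε²‖∂²ₓₓP(t,·)‖²_{L²(0,∞)} + ε(∂ₓP(t,0))² + ‖∂ₓP(t,·)‖²_{L²(0,∞)} = ‖u(t,·)‖²_{L²(0,∞)}. -/
/-! Squaring `u = Pₓ - ε Pₓₓ` gives `u² = ε² Pₓₓ² - ε (Pₓ²)ₓ + Pₓ²`; integrating over `(0, ∞)`,
the middle term contributes the boundary value `ε Pₓ(t, 0)²` because `Pₓ(t, x) → 0` as `x → ∞`. -/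

open MeasureTheory Set Filter Topology

lemma integrable_mul_of_integrable_sq {α : Type*} [MeasurableSpace α] {μ : Measure α}
    {f g : α → ℝ} (hf : AEStronglyMeasurable f μ) (hg : AEStronglyMeasurable g μ)
    (hf2 : Integrable (fun x => f x ^ 2) μ) (hg2 : Integrable (fun x => g x ^ 2) μ) :
    Integrable (fun x => f x * g x) μ :=
  ((memLp_two_iff_integrable_sq hf).2 hf2).integrable_mul ((memLp_two_iff_integrable_sq hg).2 hg2)

lemma integrableOn_mul_deriv_Ioi {f f' : ℝ → ℝ} {a : ℝ} (hf : ∀ x, HasDerivAt f (f' x) x)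
    (hf2 : IntegrableOn (fun x => f x ^ 2) (Ioi a))
    (hf'2 : IntegrableOn (fun x => f' x ^ 2) (Ioi a)) :
    IntegrableOn (fun x => f x * f' x) (Ioi a) := by
  have hf' : f' = deriv f := funext fun x => (hf x).deriv.symm
  refine integrable_mul_of_integrable_sq ?_ ?_ hf2 hf'2
  · exact (continuous_iff_continuousAt.2 fun x => (hf x).continuousAt).aestronglyMeasurable
  · exact hf' ▸ (measurable_deriv f).aestronglyMeasurable

lemma integral_Ioi_mul_deriv_of_tendsto_zero {f f' : ℝ → ℝ} {a : ℝ}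
    (hf : ∀ x, HasDerivAt f (f' x) x)
    (hf2 : IntegrableOn (fun x => f x ^ 2) (Ioi a))
    (hf'2 : IntegrableOn (fun x => f' x ^ 2) (Ioi a))
    (hlim : Tendsto f atTop (𝓝 0)) :
    ∫ x in Ioi a, f x * f' x = -(f a ^ 2 / 2) := by
  have hderiv : ∀ x, HasDerivAt (fun y => f y ^ 2 / 2) (f x * f' x) x := fun x =>
    (((hf x).pow 2).div_const 2).congr_deriv (by ring)
  have hlim2 : Tendsto (fun y => f y ^ 2 / 2) atTop (𝓝 0) := by
    simpa using (hlim.pow 2).div_const 2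
  rw [integral_Ioi_of_hasDerivAt_of_tendsto (hderiv a).continuousAt.continuousWithinAt
    (fun x _ => hderiv x) (integrableOn_mul_deriv_Ioi hf hf2 hf'2) hlim2, zero_sub]

theorem stmt0_general
    (ε : ℝ)
    (u Px Pxx : ℝ → ℝ → ℝ)
    (hPxx : ∀ t x : ℝ, HasDerivAt (fun y => Px t y) (Pxx t x) x)
    (heq2 : ∀ t x : ℝ, 0 < t → 0 < x →
      -(ε * Pxx t x) + Px t x = u t x)
    (hPx2 : ∀ t : ℝ, IntegrableOn (fun x => (Px t x)^2) (Ioi 0))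
    (hPxx2 : ∀ t : ℝ, IntegrableOn (fun x => (Pxx t x)^2) (Ioi 0))
    (hPxd : ∀ t : ℝ, Tendsto (fun x => Px t x) atTop (nhds 0))
    :
    ∀ t : ℝ, 0 < t →
      ε^2 * (∫ x in Ioi (0:ℝ), (Pxx t x)^2) + ε * (Px t 0)^2
          + (∫ x in Ioi (0:ℝ), (Px t x)^2)
        = ∫ x in Ioi (0:ℝ), (u t x)^2 := by
  intro t ht
  have hsq : ∫ x in Ioi (0:ℝ), (u t x)^2
      = ∫ x in Ioi (0:ℝ), ε^2 * (Pxx t x)^2 - 2 * ε * (Px t x * Pxx t x) + (Px t x)^2 :=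
    setIntegral_congr_fun measurableSet_Ioi fun x hx => by
      simp only [← heq2 t x ht hx]; ring
  have hA := (hPxx2 t).const_mul (ε^2)
  have hB := (integrableOn_mul_deriv_Ioi (hPxx t) (hPx2 t) (hPxx2 t)).const_mul (2 * ε)
  have hAB : IntegrableOn (fun x => ε^2 * (Pxx t x)^2 - 2 * ε * (Px t x * Pxx t x)) (Ioi 0) :=
    hA.sub hB
  rw [hsq, integral_add hAB (hPx2 t), integral_sub hA hB, integral_const_mul,
    integral_const_mul, integral_Ioi_mul_deriv_of_tendsto_zero (hPxx t) (hPx2 t) (hPxx2 t) (hPxd t)]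
  ring

theorem stmt0
    (ε γ : ℝ) (hε : 0 < ε) (hε1 : ε < 1) (hγ : 0 < γ)
    (u P ut ux uxx Px Pxx : ℝ → ℝ → ℝ) (gε u0 : ℝ → ℝ)
    (hut : ∀ t x : ℝ, HasDerivAt (fun s => u s x) (ut t x) t)
    (hux : ∀ t x : ℝ, HasDerivAt (fun y => u t y) (ux t x) x)
    (huxx : ∀ t x : ℝ, HasDerivAt (fun y => ux t y) (uxx t x) x)
    (hPx : ∀ t x : ℝ, HasDerivAt (fun y => P t y) (Px t x) x)
    (hPxx : ∀ t x : ℝ, HasDerivAt (fun y => Px t y) (Pxx t x) x)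
    (heq1 : ∀ t x : ℝ, 0 < t → 0 < x →
      ut t x + u t x * ux t x = γ * P t x + ε * uxx t x)
    (heq2 : ∀ t x : ℝ, 0 < t → 0 < x →
      -(ε * Pxx t x) + Px t x = u t x)
    (hbu : ∀ t : ℝ, 0 < t → u t 0 = gε t)
    (hbP : ∀ t : ℝ, 0 < t → P t 0 = 0)
    (hinit : ∀ x : ℝ, u 0 x = u0 x)
    (hu2 : ∀ t : ℝ, IntegrableOn (fun x => (u t x)^2) (Ioi 0))
    (hux2 : ∀ t : ℝ, IntegrableOn (fun x => (ux t x)^2) (Ioi 0))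
    (hP2 : ∀ t : ℝ, IntegrableOn (fun x => (P t x)^2) (Ioi 0))
    (hPx2 : ∀ t : ℝ, IntegrableOn (fun x => (Px t x)^2) (Ioi 0))
    (hPxx2 : ∀ t : ℝ, IntegrableOn (fun x => (Pxx t x)^2) (Ioi 0))
    (hu1 : ∀ t : ℝ, IntegrableOn (fun x => u t x) (Ioi 0))
    (hud : ∀ t : ℝ, Tendsto (fun x => u t x) atTop (nhds 0))
    (huxd : ∀ t : ℝ, Tendsto (fun x => ux t x) atTop (nhds 0))
    (hPd : ∀ t : ℝ, Tendsto (fun x => P t x) atTop (nhds 0))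
    (hPxd : ∀ t : ℝ, Tendsto (fun x => Px t x) atTop (nhds 0))
    :
    ∀ t : ℝ, 0 < t →
      ε^2 * (∫ x in Ioi (0:ℝ), (Pxx t x)^2) + ε * (Px t 0)^2
          + (∫ x in Ioi (0:ℝ), (Px t x)^2)
        = ∫ x in Ioi (0:ℝ), (u t x)^2 :=
  stmt0_general ε u Px Pxx hPxx heq2 hPx2 hPxx2 hPxd
end

section
/- Under the viscous approximation setup, for each t > 0 and every x ≥ 0 one has √ε |∂ₓP(t,x)| ≤ ‖u(t,·)‖_{L²(0,∞)}; that is, √ε ‖∂ₓP(t,·)‖_{L^∞(0,∞)} ≤ ‖u(t,·)‖_{L²(0,∞)}. -/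
/-!
From `-ε P_xx + P_x = u` one gets `(ε P_x²)' = 2 P_x (P_x - u) = P_x² + (P_x - u)² - u² ≥ -u²`.
Integrating from `x` to `∞`, where `P_x` vanishes, gives `ε P_x(x)² ≤ ∫_x^∞ u² ≤ ‖u‖²_{L²}`.
-/

open MeasureTheory Set Filter Topology

theorem le_integral_Ioi_of_neg_le_deriv {φ φ' g : ℝ → ℝ} {a : ℝ}
    (hcont : ContinuousOn φ (Ici a)) (hderiv : ∀ y ∈ Ioi a, HasDerivAt φ (φ' y) y)
    (hle : ∀ y ∈ Ioi a, -g y ≤ φ' y) (hg : IntegrableOn g (Ioi a))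
    (hφ : Tendsto φ atTop (𝓝 0)) :
    φ a ≤ ∫ y in Ioi a, g y := by
  have hbound : ∀ b ≥ a, φ a ≤ φ b + ∫ y in a..b, g y := by
    intro b hab
    have hgint : IntegrableOn (fun y => -g y) (Icc a b) :=
      ((integrableOn_Icc_iff_integrableOn_Ioc).2 (hg.mono_set Ioc_subset_Ioi_self)).neg
    have := intervalIntegral.integral_le_sub_of_hasDeriv_right_of_le hab
      (hcont.mono Icc_subset_Ici_self) (fun y hy => (hderiv y hy.1).hasDerivWithinAt) hgint
      (fun y hy => hle y hy.1)
    rw [intervalIntegral.integral_neg] at this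
    linarith
  have hlim : Tendsto (fun b => φ b + ∫ y in a..b, g y) atTop (𝓝 (0 + ∫ y in Ioi a, g y)) :=
    hφ.add (intervalIntegral_tendsto_integral_Ioi a hg tendsto_id)
  simpa using ge_of_tendsto hlim (eventually_atTop.2 ⟨a, hbound⟩)

theorem stmt2_general
    (ε : ℝ)
    (u Px Pxx : ℝ → ℝ → ℝ)
    (hPxx : ∀ t x : ℝ, HasDerivAt (fun y => Px t y) (Pxx t x) x)
    (heq2 : ∀ t x : ℝ, 0 < t → 0 < x →
      -(ε * Pxx t x) + Px t x = u t x)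
    (hu2 : ∀ t : ℝ, IntegrableOn (fun x => (u t x)^2) (Ioi 0))
    (hPxd : ∀ t : ℝ, Tendsto (fun x => Px t x) atTop (nhds 0))
    :
    ∀ t : ℝ, 0 < t → ∀ x : ℝ, 0 ≤ x →
      Real.sqrt ε * |Px t x| ≤ Real.sqrt (∫ y in Ioi (0:ℝ), (u t y)^2) := by
  intro t ht x hx
  have hderiv : ∀ y, HasDerivAt (fun y => ε * Px t y ^ 2) (2 * Px t y * (ε * Pxx t y)) y :=
    fun y => (((hPxx t y).pow 2).const_mul ε).congr_deriv (by push_cast; ring)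
  have hneg_le : ∀ y ∈ Ioi x, -(u t y ^ 2) ≤ 2 * Px t y * (ε * Pxx t y) := by
    intro y hy
    have hεPxx : ε * Pxx t y = Px t y - u t y := by linarith [heq2 t y ht (hx.trans_lt hy)]
    rw [hεPxx]
    nlinarith [sq_nonneg (Px t y - u t y), sq_nonneg (Px t y)]
  have henergy : ε * Px t x ^ 2 ≤ ∫ y in Ioi x, u t y ^ 2 :=
    le_integral_Ioi_of_neg_le_deriv (fun y _ => (hderiv y).continuousAt.continuousWithinAt)
      (fun y _ => hderiv y) hneg_le ((hu2 t).mono_set (Ioi_subset_Ioi hx))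
      (by simpa using ((hPxd t).pow 2).const_mul ε)
  have hshrink : ∫ y in Ioi x, u t y ^ 2 ≤ ∫ y in Ioi (0:ℝ), u t y ^ 2 :=
    setIntegral_mono_set (hu2 t) (.of_forall fun y => sq_nonneg _)
      (.of_forall (Ioi_subset_Ioi hx))
  calc Real.sqrt ε * |Px t x| = Real.sqrt (ε * Px t x ^ 2) := by
        rw [Real.sqrt_mul' ε (sq_nonneg _), Real.sqrt_sq_eq_abs]
    _ ≤ Real.sqrt (∫ y in Ioi (0:ℝ), u t y ^ 2) := Real.sqrt_le_sqrt (henergy.trans hshrink)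

theorem stmt2
    (ε γ : ℝ) (hε : 0 < ε) (hε1 : ε < 1) (hγ : 0 < γ)
    (u P ut ux uxx Px Pxx : ℝ → ℝ → ℝ) (gε u0 : ℝ → ℝ)
    (hut : ∀ t x : ℝ, HasDerivAt (fun s => u s x) (ut t x) t)
    (hux : ∀ t x : ℝ, HasDerivAt (fun y => u t y) (ux t x) x)
    (huxx : ∀ t x : ℝ, HasDerivAt (fun y => ux t y) (uxx t x) x)
    (hPx : ∀ t x : ℝ, HasDerivAt (fun y => P t y) (Px t x) x)
    (hPxx : ∀ t x : ℝ, HasDerivAt (fun y => Px t y) (Pxx t x) x)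
    (heq1 : ∀ t x : ℝ, 0 < t → 0 < x →
      ut t x + u t x * ux t x = γ * P t x + ε * uxx t x)
    (heq2 : ∀ t x : ℝ, 0 < t → 0 < x →
      -(ε * Pxx t x) + Px t x = u t x)
    (hbu : ∀ t : ℝ, 0 < t → u t 0 = gε t)
    (hbP : ∀ t : ℝ, 0 < t → P t 0 = 0)
    (hinit : ∀ x : ℝ, u 0 x = u0 x)
    (hu2 : ∀ t : ℝ, IntegrableOn (fun x => (u t x)^2) (Ioi 0))
    (hux2 : ∀ t : ℝ, IntegrableOn (fun x => (ux t x)^2) (Ioi 0))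
    (hP2 : ∀ t : ℝ, IntegrableOn (fun x => (P t x)^2) (Ioi 0))
    (hPx2 : ∀ t : ℝ, IntegrableOn (fun x => (Px t x)^2) (Ioi 0))
    (hPxx2 : ∀ t : ℝ, IntegrableOn (fun x => (Pxx t x)^2) (Ioi 0))
    (hu1 : ∀ t : ℝ, IntegrableOn (fun x => u t x) (Ioi 0))
    (hud : ∀ t : ℝ, Tendsto (fun x => u t x) atTop (nhds 0))
    (huxd : ∀ t : ℝ, Tendsto (fun x => ux t x) atTop (nhds 0))
    (hPd : ∀ t : ℝ, Tendsto (fun x => P t x) atTop (nhds 0))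
    (hPxd : ∀ t : ℝ, Tendsto (fun x => Px t x) atTop (nhds 0))
    :
    ∀ t : ℝ, 0 < t → ∀ x : ℝ, 0 ≤ x →
      Real.sqrt ε * |Px t x| ≤ Real.sqrt (∫ y in Ioi (0:ℝ), (u t y)^2) :=
  stmt2_general ε u Px Pxx hPxx heq2 hu2 hPxd
end

section
/- Under the viscous approximation setup, for each t > 0 one has the identity ∫₀^∞ u(t,x) P(t,x) dx = ε ∫₀^∞ (∂ₓP(t,x))² dx; in particular, since 0 < ε < 1, ∫₀^∞ u(t,x) P(t,x) dx ≤ ‖u(t,·)‖²_{L²(0,∞)}. -/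
open MeasureTheory Set Filter

lemma mul_int_aux {f g : ℝ → ℝ}
    (hm : AEStronglyMeasurable (fun x => f x * g x) (volume.restrict (Ioi (0:ℝ))))
    (hf2 : IntegrableOn (fun x => (f x)^2) (Ioi (0:ℝ)))
    (hg2 : IntegrableOn (fun x => (g x)^2) (Ioi (0:ℝ))) :
    IntegrableOn (fun x => f x * g x) (Ioi (0:ℝ)) := by
  apply Integrable.mono' (((hf2.add hg2).div_const 2)) hm
  filter_upwards with x
  simp only [Pi.add_apply]
  rw [Real.norm_eq_abs, abs_mul]
  nlinarith [sq_nonneg (|f x| - |g x|), sq_abs (f x), sq_abs (g x),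
    abs_nonneg (f x), abs_nonneg (g x)]

theorem stmt3
    (ε γ : ℝ) (hε : 0 < ε) (hε1 : ε < 1) (hγ : 0 < γ)
    (u P ut ux uxx Px Pxx : ℝ → ℝ → ℝ) (gε u0 : ℝ → ℝ)
    (hut : ∀ t x : ℝ, HasDerivAt (fun s => u s x) (ut t x) t)
    (hux : ∀ t x : ℝ, HasDerivAt (fun y => u t y) (ux t x) x)
    (huxx : ∀ t x : ℝ, HasDerivAt (fun y => ux t y) (uxx t x) x)
    (hPx : ∀ t x : ℝ, HasDerivAt (fun y => P t y) (Px t x) x)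
    (hPxx : ∀ t x : ℝ, HasDerivAt (fun y => Px t y) (Pxx t x) x)
    (heq1 : ∀ t x : ℝ, 0 < t → 0 < x →
      ut t x + u t x * ux t x = γ * P t x + ε * uxx t x)
    (heq2 : ∀ t x : ℝ, 0 < t → 0 < x →
      -(ε * Pxx t x) + Px t x = u t x)
    (hbu : ∀ t : ℝ, 0 < t → u t 0 = gε t)
    (hbP : ∀ t : ℝ, 0 < t → P t 0 = 0)
    (hinit : ∀ x : ℝ, u 0 x = u0 x)
    (hu2 : ∀ t : ℝ, IntegrableOn (fun x => (u t x)^2) (Ioi 0))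
    (hux2 : ∀ t : ℝ, IntegrableOn (fun x => (ux t x)^2) (Ioi 0))
    (hP2 : ∀ t : ℝ, IntegrableOn (fun x => (P t x)^2) (Ioi 0))
    (hPx2 : ∀ t : ℝ, IntegrableOn (fun x => (Px t x)^2) (Ioi 0))
    (hPxx2 : ∀ t : ℝ, IntegrableOn (fun x => (Pxx t x)^2) (Ioi 0))
    (hu1 : ∀ t : ℝ, IntegrableOn (fun x => u t x) (Ioi 0))
    (hud : ∀ t : ℝ, Tendsto (fun x => u t x) atTop (nhds 0))
    (huxd : ∀ t : ℝ, Tendsto (fun x => ux t x) atTop (nhds 0))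
    (hPd : ∀ t : ℝ, Tendsto (fun x => P t x) atTop (nhds 0))
    (hPxd : ∀ t : ℝ, Tendsto (fun x => Px t x) atTop (nhds 0))
    :
    ∀ t : ℝ, 0 < t →
      (∫ x in Ioi (0:ℝ), u t x * P t x) = ε * (∫ x in Ioi (0:ℝ), (Px t x)^2)
      ∧ (∫ x in Ioi (0:ℝ), u t x * P t x) ≤ ∫ x in Ioi (0:ℝ), (u t x)^2 := by
  intro t ht
  -- continuity facts
  have cP : Continuous (fun x => P t x) :=
    continuous_iff_continuousAt.2 fun x => (hPx t x).differentiableAt.continuousAt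
  have cPx : Continuous (fun x => Px t x) :=
    continuous_iff_continuousAt.2 fun x => (hPxx t x).differentiableAt.continuousAt
  have cu : Continuous (fun x => u t x) :=
    continuous_iff_continuousAt.2 fun x => (hux t x).differentiableAt.continuousAt
  have hPxxm : Measurable (fun x => Pxx t x) := by
    have : (fun x => Pxx t x) = deriv (fun y => Px t y) :=
      funext fun x => ((hPxx t x).deriv).symm
    rw [this]; exact measurable_deriv _
  -- integrability of products
  have iPPxx : IntegrableOn (fun x => P t x * Pxx t x) (Ioi 0) :=
    mul_int_aux (cP.aestronglyMeasurable.mul hPxxm.aestronglyMeasurable) (hP2 t) (hPxx2 t)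
  have iPxPxx : IntegrableOn (fun x => Px t x * Pxx t x) (Ioi 0) :=
    mul_int_aux (cPx.aestronglyMeasurable.mul hPxxm.aestronglyMeasurable) (hPx2 t) (hPxx2 t)
  have iPPx : IntegrableOn (fun x => Px t x * P t x) (Ioi 0) :=
    mul_int_aux (cPx.aestronglyMeasurable.mul cP.aestronglyMeasurable) (hPx2 t) (hP2 t)
  have iuPx : IntegrableOn (fun x => u t x * Px t x) (Ioi 0) :=
    mul_int_aux (cu.aestronglyMeasurable.mul cPx.aestronglyMeasurable) (hu2 t) (hPx2 t)
  have iPx2 : IntegrableOn (fun x => Px t x * Px t x) (Ioi 0) := by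
    simpa [pow_two] using hPx2 t
  -- I1 : ∫ (Px*Px + P*Pxx) = - P0 * Px0 = 0
  have I1 : (∫ x in Ioi (0:ℝ), (Px t x * Px t x + P t x * Pxx t x))
      = 0 - P t 0 * Px t 0 := by
    apply integral_Ioi_of_hasDerivAt_of_tendsto (f := fun x => P t x * Px t x)
    · exact (cP.mul cPx).continuousWithinAt
    · intro x _; exact (hPx t x).mul (hPxx t x)
    · exact iPx2.add iPPxx
    · simpa using (hPd t).mul (hPxd t)
  have I1' : (∫ x in Ioi (0:ℝ), P t x * Pxx t x)
      = - ∫ x in Ioi (0:ℝ), Px t x * Px t x := by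
    have := integral_add iPx2 iPPxx
    rw [hbP t ht] at I1
    simp only [zero_mul, sub_zero, zero_sub] at I1 ⊢
    rw [this] at I1
    linarith
  -- I2 : ∫ (Px*P + P*Px) = 0
  have I2 : (∫ x in Ioi (0:ℝ), (Px t x * P t x + P t x * Px t x))
      = 0 - P t 0 * P t 0 := by
    apply integral_Ioi_of_hasDerivAt_of_tendsto (f := fun x => P t x * P t x)
    · exact (cP.mul cP).continuousWithinAt
    · intro x _; exact (hPx t x).mul (hPx t x)
    · have : IntegrableOn (fun x => P t x * Px t x) (Ioi 0) := by
        simpa [mul_comm] using iPPx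
      exact iPPx.add this
    · simpa using (hPd t).mul (hPd t)
  have I2' : (∫ x in Ioi (0:ℝ), Px t x * P t x) = 0 := by
    have hc : (fun x => Px t x * P t x + P t x * Px t x)
        = fun x => Px t x * P t x + Px t x * P t x := by
      funext x; ring
    rw [hc] at I2
    have := integral_add iPPx iPPx
    rw [this, hbP t ht] at I2
    simp at I2
    linarith
  -- I3 : ∫ (Pxx*Px + Px*Pxx) = - Px0^2
  have I3 : (∫ x in Ioi (0:ℝ), (Pxx t x * Px t x + Px t x * Pxx t x))
      = 0 - Px t 0 * Px t 0 := by
    apply integral_Ioi_of_hasDerivAt_of_tendsto (f := fun x => Px t x * Px t x)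
    · exact (cPx.mul cPx).continuousWithinAt
    · intro x _; exact (hPxx t x).mul (hPxx t x)
    · have : IntegrableOn (fun x => Pxx t x * Px t x) (Ioi 0) := by
        simpa [mul_comm] using iPxPxx
      exact this.add iPxPxx
    · simpa using (hPxd t).mul (hPxd t)
  have I3' : (∫ x in Ioi (0:ℝ), Px t x * Pxx t x) = - (Px t 0 * Px t 0) / 2 := by
    have hc : (fun x => Pxx t x * Px t x + Px t x * Pxx t x)
        = fun x => Px t x * Pxx t x + Px t x * Pxx t x := by
      funext x; ring
    rw [hc] at I3
    rw [integral_add iPxPxx iPxPxx] at I3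
    linarith
  -- rewrite ∫ u P using heq2
  have hmeas : MeasurableSet (Ioi (0:ℝ)) := measurableSet_Ioi
  have key : (∫ x in Ioi (0:ℝ), u t x * P t x)
      = ∫ x in Ioi (0:ℝ), ((-ε) * (P t x * Pxx t x) + Px t x * P t x) := by
    apply setIntegral_congr_fun hmeas
    intro x hx
    have h2 := heq2 t x ht hx
    simp only
    rw [← h2]; ring
  have split1 : (∫ x in Ioi (0:ℝ), ((-ε) * (P t x * Pxx t x) + Px t x * P t x))
      = (-ε) * (∫ x in Ioi (0:ℝ), P t x * Pxx t x) + ∫ x in Ioi (0:ℝ), Px t x * P t x := by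
    rw [integral_add (iPPxx.const_mul _) iPPx, integral_const_mul]
  have hPx2eq : (∫ x in Ioi (0:ℝ), (Px t x)^2) = ∫ x in Ioi (0:ℝ), Px t x * Px t x := by
    simp [pow_two]
  have main1 : (∫ x in Ioi (0:ℝ), u t x * P t x) = ε * (∫ x in Ioi (0:ℝ), (Px t x)^2) := by
    rw [key, split1, I1', I2', hPx2eq]; ring
  refine ⟨main1, ?_⟩
  -- second part: ∫ Px^2 ≤ ∫ u^2
  have keyPx : (∫ x in Ioi (0:ℝ), u t x * Px t x)
      = ∫ x in Ioi (0:ℝ), ((-ε) * (Px t x * Pxx t x) + Px t x * Px t x) := by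
    apply setIntegral_congr_fun hmeas
    intro x hx
    have h2 := heq2 t x ht hx
    simp only
    rw [← h2]; ring
  have split2 : (∫ x in Ioi (0:ℝ), ((-ε) * (Px t x * Pxx t x) + Px t x * Px t x))
      = (-ε) * (∫ x in Ioi (0:ℝ), Px t x * Pxx t x) + ∫ x in Ioi (0:ℝ), Px t x * Px t x := by
    rw [integral_add (iPxPxx.const_mul _) iPx2, integral_const_mul]
  have hge : (∫ x in Ioi (0:ℝ), Px t x * Px t x) ≤ ∫ x in Ioi (0:ℝ), u t x * Px t x := by
    rw [keyPx, split2, I3']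
    nlinarith [sq_nonneg (Px t 0), sq (Px t 0), mul_self_nonneg (Px t 0)]
  have hub : (∫ x in Ioi (0:ℝ), u t x * Px t x)
      ≤ ∫ x in Ioi (0:ℝ), (((u t x)^2 + (Px t x)^2) / 2) := by
    apply setIntegral_mono_on iuPx (((hu2 t).add (hPx2 t)).div_const 2) hmeas
    intro x _
    simp only [Pi.add_apply]
    nlinarith [sq_nonneg (u t x - Px t x)]
  have hsplit3 : (∫ x in Ioi (0:ℝ), (((u t x)^2 + (Px t x)^2) / 2))
      = ((∫ x in Ioi (0:ℝ), (u t x)^2) + ∫ x in Ioi (0:ℝ), (Px t x)^2) / 2 := by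
    rw [integral_div, integral_add (hu2 t) (hPx2 t)]
  have hPxle : (∫ x in Ioi (0:ℝ), (Px t x)^2) ≤ ∫ x in Ioi (0:ℝ), (u t x)^2 := by
    rw [hPx2eq]
    linarith [hge, hub, hsplit3, hPx2eq]
  have hPxnn : 0 ≤ ∫ x in Ioi (0:ℝ), (Px t x)^2 :=
    integral_nonneg fun x => sq_nonneg _
  rw [main1]
  nlinarith
end
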